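/- arXiv:2104.03714 — 4 statements merged into one kernel-verified Lean document; each statement's English description precedes it below -/
import Mathlib

section
/- Let a₀ ∈ ℝ, let u₀ : ℝ → ℂ be measurable and integrable on (a₀, ∞), and let k ∈ ℝ. If μ : [a₀, ∞) → ℂ^{2×2} is bounded, continuous and satisfies μ(x) = I − ∫ₓ^∞ diag(e^{ik(x′−x)}, e^{−ik(x′−x)}) · (U₀(x′)·μ(x′)) · diag(e^{−ik(x′−x)}, e^{ik(x′−x)}) dx′ for all x ≥ a₀, then det μ(x) = 1 for all x ≥ a₀. -/
open MeasureTheory Set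

/-- The potential matrix `U₀(x) = [[0, u₀(x)], [conj(u₀(x)), 0]]`. -/
noncomputable def NLS.U0 (u₀ : ℝ → ℂ) (x : ℝ) : Matrix (Fin 2) (Fin 2) ℂ :=
  Matrix.of ![![0, u₀ x], ![(starRingEnd ℂ) (u₀ x), 0]]

/-- The diagonal matrix `diag(e^{ik(x′−x)}, e^{−ik(x′−x)})`. -/
noncomputable def NLS.D (k x x' : ℝ) : Matrix (Fin 2) (Fin 2) ℂ :=
  Matrix.diagonal ![Complex.exp (Complex.I * k * (x' - x)),
    Complex.exp (-(Complex.I * k * (x' - x)))]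

/-- `μ` is a bounded continuous solution on `[a₀, ∞)` of the Volterra integral equation
`μ(x) = I − ∫ₓ^∞ diag(e^{ik(x′−x)}, e^{−ik(x′−x)}) · (U₀(x′)·μ(x′)) ·
diag(e^{−ik(x′−x)}, e^{ik(x′−x)}) dx′` defining the Jost eigenfunction `μ₂` at `t = 0`. -/
def NLS.IsVolterraSolution (u₀ : ℝ → ℂ) (k a₀ : ℝ)
    (μ : ℝ → Matrix (Fin 2) (Fin 2) ℂ) : Prop :=
  ContinuousOn μ (Ici a₀) ∧
  (∃ C : ℝ, ∀ x ∈ Ici a₀, ∀ i j, ‖μ x i j‖ ≤ C) ∧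
  ∀ x, a₀ ≤ x →
    μ x = 1 - Matrix.of fun i j =>
      ∫ x' in Ioi x, (NLS.D k x x' * (NLS.U0 u₀ x' * μ x') * NLS.D k x' x) i j

/-!
Write `μ = [[a, b], [c, d]]`. Entrywise, the integral equation says that `1 - a`, `1 - d`,
`-e^{2ikx} b` and `-e^{-2ikx} c` are the tails `∫ₓ^∞` of `u₀ c`, `ū₀ b`, `e^{2ikt} u₀ d` and
`e^{-2ikt} ū₀ a`. A product of two tail integrals splits, by Fubini over the triangles `s < t` and
`t ≤ s`, into two iterated integrals whose inner integrals are again tails; substituting the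
equations back gives `a d = 1 - X - Y` and `b c = -X - Y` with `X = ∫ₓ^∞ u₀ c d` and
`Y = ∫ₓ^∞ ū₀ b a`, so `det μ = a d - b c = 1` without differentiating `μ`.
-/

section ProductOfTails

variable {𝕜 : Type*} [RCLike 𝕜]

theorem setIntegral_prod_mul_of_fiber {α β : Type*} [MeasurableSpace α] [MeasurableSpace β]
    {μ : Measure α} {ν : Measure β} [SFinite μ] [SFinite ν] {f : α → 𝕜} {g : β → 𝕜}
    (hf : Integrable f μ) (hg : Integrable g ν) {T : α → Set β}
    (hT : MeasurableSet {p : α × β | p.2 ∈ T p.1}) :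
    ∫ p in {p : α × β | p.2 ∈ T p.1}, f p.1 * g p.2 ∂μ.prod ν =
      ∫ a, f a * ∫ b in T a, g b ∂ν ∂μ := by
  rw [← integral_indicator hT, integral_prod _ ((hf.mul_prod hg).indicator hT)]
  refine integral_congr_ae (ae_of_all _ fun a => ?_)
  have hTa : MeasurableSet (T a) := measurable_prodMk_left hT
  dsimp only
  rw [← integral_const_mul, ← integral_indicator hTa]
  rfl

theorem integral_mul_integral_eq_sum_integral_mul_integral_Ioi {ν : Measure ℝ} [SFinite ν]
    [NullSingletonClass ν] {f g : ℝ → 𝕜} (hf : Integrable f ν) (hg : Integrable g ν) :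
    (∫ t, f t ∂ν) * ∫ t, g t ∂ν =
      (∫ s, f s * ∫ t in Ioi s, g t ∂ν ∂ν) + ∫ s, g s * ∫ t in Ioi s, f t ∂ν ∂ν := by
  have hlt : MeasurableSet {p : ℝ × ℝ | p.2 ∈ Ioi p.1} :=
    measurableSet_lt measurable_fst measurable_snd
  have hle : MeasurableSet {p : ℝ × ℝ | p.2 ∈ Ici p.1} :=
    measurableSet_le measurable_fst measurable_snd
  rw [← integral_prod_mul, ← integral_add_compl hlt (hf.mul_prod hg),
    setIntegral_prod_mul_of_fiber hf hg hlt]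
  congr 1
  calc ∫ p in {p : ℝ × ℝ | p.2 ∈ Ioi p.1}ᶜ, f p.1 * g p.2 ∂ν.prod ν
      = ∫ p, {p : ℝ × ℝ | p.2 ∈ Ici p.1}.indicator (fun q => g q.1 * f q.2) p.swap ∂ν.prod ν := by
        rw [← integral_indicator hlt.compl]
        congr with p
        simp [indicator, mul_comm]
    _ = ∫ p in {p : ℝ × ℝ | p.2 ∈ Ici p.1}, g p.1 * f p.2 ∂ν.prod ν := by
        rw [integral_prod_swap, integral_indicator hle]
    _ = ∫ s, g s * ∫ t in Ioi s, f t ∂ν ∂ν := by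
        simp_rw [setIntegral_prod_mul_of_fiber hg hf hle, integral_Ici_eq_integral_Ioi]

theorem integral_Ioi_mul_integral_Ioi {ν : Measure ℝ} [SFinite ν] [NullSingletonClass ν]
    {f g : ℝ → 𝕜} {x : ℝ} (hf : IntegrableOn f (Ioi x) ν) (hg : IntegrableOn g (Ioi x) ν) :
    (∫ t in Ioi x, f t ∂ν) * ∫ t in Ioi x, g t ∂ν =
      (∫ s in Ioi x, f s * ∫ t in Ioi s, g t ∂ν ∂ν) +
        ∫ s in Ioi x, g s * ∫ t in Ioi s, f t ∂ν ∂ν := by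
  have restrict_Ioi : ∀ s ∈ Ioi x, (ν.restrict (Ioi x)).restrict (Ioi s) = ν.restrict (Ioi s) :=
    fun s hs => by
      rw [Measure.restrict_restrict measurableSet_Ioi, inter_eq_left.2 (Ioi_subset_Ioi hs.le)]
  rw [integral_mul_integral_eq_sum_integral_mul_integral_Ioi hf hg]
  congr 1 <;> exact setIntegral_congr_fun measurableSet_Ioi fun s hs => by rw [restrict_Ioi s hs]

end ProductOfTails

theorem MeasureTheory.IntegrableOn.mul_exp_ofReal_mul_I {g : ℝ → ℂ} {s : Set ℝ}
    (hg : IntegrableOn g s) {θ : ℝ → ℝ} (hθ : Measurable θ) :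
    IntegrableOn (fun t => g t * Complex.exp (θ t * Complex.I)) s :=
  hg.mul_bdd (by fun_prop : Measurable _).aestronglyMeasurable
    (ae_of_all _ fun t => (Complex.norm_exp_ofReal_mul_I (θ t)).le)

theorem MeasureTheory.Integrable.conj {α 𝕜 : Type*} [MeasurableSpace α] [RCLike 𝕜]
    {μ : Measure α} {f : α → 𝕜} (hf : Integrable f μ) :
    Integrable (fun a => starRingEnd 𝕜 (f a)) μ :=
  RCLike.conjCLE.toContinuousLinearMap.integrable_comp hf

theorem Complex.exp_mul_I_mul_exp_neg (z : ℂ) :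
    Complex.exp (z * Complex.I) * Complex.exp (-(z * Complex.I)) = 1 := by
  rw [← Complex.exp_add, add_neg_cancel, Complex.exp_zero]

namespace NLS

open Complex ComplexConjugate

theorem D_mul_U0_mul_D (u₀ : ℝ → ℂ) (k x t : ℝ) (M : Matrix (Fin 2) (Fin 2) ℂ) :
    D k x t * (U0 u₀ t * M) * D k t x =
      !![u₀ t * M 1 0, exp (-(2 * k * x * I)) * (u₀ t * M 1 1 * exp (2 * k * t * I));
        exp (2 * k * x * I) * (conj (u₀ t) * M 0 0 * exp (-(2 * k * t * I))),
          conj (u₀ t) * M 0 1] := by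
  ext i j
  fin_cases i <;> fin_cases j <;>
    simp [D, U0, Matrix.mul_apply, Fin.sum_univ_two, Matrix.vecMul, dotProduct] <;>
    rw [mul_right_comm, ← exp_add]
  · ring_nf; simp
  · rw [mul_comm (cexp _) (_ * _ * _), mul_assoc _ (cexp _), ← exp_add]; ring_nf
  · rw [mul_comm (cexp _) (_ * _ * _), mul_assoc _ (cexp _), ← exp_add]; ring_nf
  · ring_nf; simp

namespace IsVolterraSolution

variable {u₀ : ℝ → ℂ} {k a₀ : ℝ} {μ : ℝ → Matrix (Fin 2) (Fin 2) ℂ} {x : ℝ}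

theorem integral_Ioi_mul_apply_one_zero (hμ : IsVolterraSolution u₀ k a₀ μ) (hx : a₀ ≤ x) :
    ∫ t in Ioi x, u₀ t * μ t 1 0 = 1 - μ x 0 0 := by
  have h := congrFun₂ (hμ.2.2 x hx) 0 0
  simp [D_mul_U0_mul_D] at h
  linear_combination h

theorem integral_Ioi_conj_mul_apply_zero_one (hμ : IsVolterraSolution u₀ k a₀ μ) (hx : a₀ ≤ x) :
    ∫ t in Ioi x, conj (u₀ t) * μ t 0 1 = 1 - μ x 1 1 := by
  have h := congrFun₂ (hμ.2.2 x hx) 1 1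
  simp [D_mul_U0_mul_D] at h
  linear_combination h

theorem integral_Ioi_mul_apply_one_one_mul_exp (hμ : IsVolterraSolution u₀ k a₀ μ)
    (hx : a₀ ≤ x) :
    ∫ t in Ioi x, u₀ t * μ t 1 1 * exp (2 * k * t * I) = -(exp (2 * k * x * I) * μ x 0 1) := by
  have h := congrFun₂ (hμ.2.2 x hx) 0 1
  simp [D_mul_U0_mul_D, integral_const_mul] at h
  linear_combination exp (2 * k * x * I) * h -
    (∫ t in Ioi x, u₀ t * μ t 1 1 * exp (2 * k * t * I)) * exp_mul_I_mul_exp_neg (2 * k * x)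

theorem integral_Ioi_conj_mul_apply_zero_zero_mul_exp (hμ : IsVolterraSolution u₀ k a₀ μ)
    (hx : a₀ ≤ x) :
    ∫ t in Ioi x, conj (u₀ t) * μ t 0 0 * exp (-(2 * k * t * I)) =
      -(exp (-(2 * k * x * I)) * μ x 1 0) := by
  have h := congrFun₂ (hμ.2.2 x hx) 1 0
  simp [D_mul_U0_mul_D, integral_const_mul] at h
  linear_combination exp (-(2 * k * x * I)) * h -
    (∫ t in Ioi x, conj (u₀ t) * μ t 0 0 * exp (-(2 * k * t * I))) *
      exp_mul_I_mul_exp_neg (2 * k * x)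

theorem integrableOn_mul_apply (hμ : IsVolterraSolution u₀ k a₀ μ) (hx : a₀ ≤ x) {g : ℝ → ℂ}
    (hg : IntegrableOn g (Ioi x)) (i j : Fin 2) :
    IntegrableOn (fun t => g t * μ t i j) (Ioi x) := by
  obtain ⟨hcont, ⟨C, hC⟩, -⟩ := hμ
  have hsub : Ioi x ⊆ Ici a₀ := Ioi_subset_Ici hx
  refine hg.mul_bdd ?_ ((ae_restrict_iff' measurableSet_Ioi).2
    (ae_of_all _ fun t ht => hC t (hsub ht) i j))
  exact (((Continuous.matrix_elem continuous_id i j).comp_continuousOn hcont).mono hsub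
    ).aestronglyMeasurable measurableSet_Ioi

theorem apply_zero_zero_mul_apply_one_one (hint : IntegrableOn u₀ (Ioi a₀))
    (hμ : IsVolterraSolution u₀ k a₀ μ) (hx : a₀ ≤ x) :
    μ x 0 0 * μ x 1 1 = 1 - (∫ t in Ioi x, u₀ t * μ t 1 0 * μ t 1 1) -
      ∫ t in Ioi x, conj (u₀ t) * μ t 0 1 * μ t 0 0 := by
  have hu : IntegrableOn u₀ (Ioi x) := hint.mono_set (Ioi_subset_Ioi hx)
  have hA := hμ.integrableOn_mul_apply hx hu 1 0
  have hB := hμ.integrableOn_mul_apply hx hu.conj 0 1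
  have hprod := integral_Ioi_mul_integral_Ioi hA hB
  have h₁ : ∫ s in Ioi x, u₀ s * μ s 1 0 * ∫ t in Ioi s, conj (u₀ t) * μ t 0 1 =
      (1 - μ x 0 0) - ∫ t in Ioi x, u₀ t * μ t 1 0 * μ t 1 1 := by
    rw [← hμ.integral_Ioi_mul_apply_one_zero hx,
      ← integral_sub hA (hμ.integrableOn_mul_apply hx hA 1 1)]
    refine setIntegral_congr_fun measurableSet_Ioi fun s hs => ?_
    rw [hμ.integral_Ioi_conj_mul_apply_zero_one (hx.trans hs.le)]
    ring
  have h₂ : ∫ s in Ioi x, conj (u₀ s) * μ s 0 1 * ∫ t in Ioi s, u₀ t * μ t 1 0 =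
      (1 - μ x 1 1) - ∫ t in Ioi x, conj (u₀ t) * μ t 0 1 * μ t 0 0 := by
    rw [← hμ.integral_Ioi_conj_mul_apply_zero_one hx,
      ← integral_sub hB (hμ.integrableOn_mul_apply hx hB 0 0)]
    refine setIntegral_congr_fun measurableSet_Ioi fun s hs => ?_
    rw [hμ.integral_Ioi_mul_apply_one_zero (hx.trans hs.le)]
    ring
  rw [h₁, h₂, hμ.integral_Ioi_mul_apply_one_zero hx,
    hμ.integral_Ioi_conj_mul_apply_zero_one hx] at hprod
  linear_combination hprod

theorem apply_zero_one_mul_apply_one_zero (hint : IntegrableOn u₀ (Ioi a₀))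
    (hμ : IsVolterraSolution u₀ k a₀ μ) (hx : a₀ ≤ x) :
    μ x 0 1 * μ x 1 0 = -(∫ t in Ioi x, u₀ t * μ t 1 0 * μ t 1 1) -
      ∫ t in Ioi x, conj (u₀ t) * μ t 0 1 * μ t 0 0 := by
  have hu : IntegrableOn u₀ (Ioi x) := hint.mono_set (Ioi_subset_Ioi hx)
  have hP : IntegrableOn (fun t => u₀ t * μ t 1 1 * exp (2 * k * t * I)) (Ioi x) := by
    simpa using (hμ.integrableOn_mul_apply hx hu 1 1).mul_exp_ofReal_mul_I
      (θ := fun t => 2 * k * t) (by fun_prop)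
  have hQ : IntegrableOn (fun t => conj (u₀ t) * μ t 0 0 * exp (-(2 * k * t * I))) (Ioi x) := by
    simpa using (hμ.integrableOn_mul_apply hx hu.conj 0 0).mul_exp_ofReal_mul_I
      (θ := fun t => -(2 * k * t)) (by fun_prop)
  have hprod := integral_Ioi_mul_integral_Ioi hP hQ
  have h₁ : ∫ s in Ioi x, u₀ s * μ s 1 1 * exp (2 * k * s * I) *
      ∫ t in Ioi s, conj (u₀ t) * μ t 0 0 * exp (-(2 * k * t * I)) =
      -∫ t in Ioi x, u₀ t * μ t 1 0 * μ t 1 1 := by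
    rw [← integral_neg]
    refine setIntegral_congr_fun measurableSet_Ioi fun s hs => ?_
    rw [hμ.integral_Ioi_conj_mul_apply_zero_zero_mul_exp (hx.trans hs.le)]
    linear_combination (-(u₀ s * μ s 1 0 * μ s 1 1)) * exp_mul_I_mul_exp_neg (2 * k * s)
  have h₂ : ∫ s in Ioi x, conj (u₀ s) * μ s 0 0 * exp (-(2 * k * s * I)) *
      ∫ t in Ioi s, u₀ t * μ t 1 1 * exp (2 * k * t * I) =
      -∫ t in Ioi x, conj (u₀ t) * μ t 0 1 * μ t 0 0 := by
    rw [← integral_neg]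
    refine setIntegral_congr_fun measurableSet_Ioi fun s hs => ?_
    rw [hμ.integral_Ioi_mul_apply_one_one_mul_exp (hx.trans hs.le)]
    linear_combination (-(conj (u₀ s) * μ s 0 1 * μ s 0 0)) * exp_mul_I_mul_exp_neg (2 * k * s)
  rw [h₁, h₂, hμ.integral_Ioi_mul_apply_one_one_mul_exp hx,
    hμ.integral_Ioi_conj_mul_apply_zero_zero_mul_exp hx] at hprod
  linear_combination hprod - μ x 0 1 * μ x 1 0 * exp_mul_I_mul_exp_neg (2 * k * x)

end IsVolterraSolution
end NLS

theorem volterra_solution_det_one_general (a₀ : ℝ) (u₀ : ℝ → ℂ)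
    (hint : IntegrableOn u₀ (Ioi a₀)) (k : ℝ)
    (μ : ℝ → Matrix (Fin 2) (Fin 2) ℂ) (hμ : NLS.IsVolterraSolution u₀ k a₀ μ) :
    ∀ x, a₀ ≤ x → (μ x).det = 1 := by
  intro x hx
  rw [Matrix.det_fin_two]
  linear_combination hμ.apply_zero_zero_mul_apply_one_one hint hx -
    hμ.apply_zero_one_mul_apply_one_zero hint hx

/-- Any bounded continuous solution of the Volterra integral equation for the Jost
eigenfunction `μ₂` has unit determinant on `[a₀, ∞)`. -/
theorem volterra_solution_det_one (a₀ : ℝ) (u₀ : ℝ → ℂ) (hmeas : Measurable u₀)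
    (hint : IntegrableOn u₀ (Ioi a₀)) (k : ℝ)
    (μ : ℝ → Matrix (Fin 2) (Fin 2) ℂ) (hμ : NLS.IsVolterraSolution u₀ k a₀ μ) :
    ∀ x, a₀ ≤ x → (μ x).det = 1 :=
  volterra_solution_det_one_general a₀ u₀ hint k μ hμ
end

section
/- Let a₀ ∈ ℝ, let u₀ : ℝ → ℂ be measurable and integrable on (a₀, ∞), and let k ∈ ℝ. If μ : [a₀, ∞) → ℂ^{2×2} is the (unique) bounded continuous solution of μ(x) = I − ∫ₓ^∞ diag(e^{ik(x′−x)}, e^{−ik(x′−x)}) · (U₀(x′)·μ(x′)) · diag(e^{−ik(x′−x)}, e^{ik(x′−x)}) dx′ on [a₀, ∞), then σ₁ · conj(μ(x)) · σ₁ = μ(x) for all x ≥ a₀, where conj denotes entrywise complex conjugation; equivalently, μ(x)₂₂ = conj(μ(x)₁₁) and μ(x)₂₁ = conj(μ(x)₁₂) for all x ≥ a₀. -/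
/-! Conjugation `M ↦ σ₁ M̄ σ₁` is a ring automorphism of `2 × 2` complex matrices fixing both
`diag(e^{ikt}, e^{-ikt})` and `U₀`, so it maps solutions of the Volterra equation to solutions,
and it suffices to show that bounded continuous solutions are unique. In the entrywise sup norm
the difference `w` of two solutions obeys `‖w(x)‖ ≤ ∫ₓ^∞ |u₀| ‖w‖`. On a half-line `[b, ∞)` on
which `w` vanishes outside a set carrying `∫ |u₀| ≤ 1/2`, this inequality halves every bound for
`‖w‖`, so `w = 0` there; the tail of `|u₀|` and its absolute continuity give finitely many such
steps covering `[a₀, ∞)`. -/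

open MeasureTheory Set

/-- The first Pauli matrix `σ₁ = [[0,1],[1,0]]`. -/
def NLS.sigma1 : Matrix (Fin 2) (Fin 2) ℂ := Matrix.of ![![0, 1], ![1, 0]]

open Filter Topology

theorem nonpos_of_forall_le_half {α : Type*} {S : Set α} {H : α → ℝ} {M : ℝ}
    (hM : ∀ y ∈ S, H y ≤ M) (hhalf : ∀ B, (∀ y ∈ S, H y ≤ B) → ∀ y ∈ S, H y ≤ B / 2) :
    ∀ y ∈ S, H y ≤ 0 := by
  have hpow : ∀ n : ℕ, ∀ y ∈ S, H y ≤ M / 2 ^ n := by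
    intro n
    induction n with
    | zero => simpa using hM
    | succ n ih => rw [pow_succ, ← div_div]; exact hhalf _ ih
  have hlim : Tendsto (fun n : ℕ => M / 2 ^ n) atTop (𝓝 0) :=
    tendsto_const_nhds.div_atTop (tendsto_pow_atTop_atTop_of_one_lt one_lt_two)
  exact fun y hy => ge_of_tendsto' hlim fun n => hpow n y hy

theorem MeasureTheory.IntegrableOn.exists_setIntegral_Ioi_le {g : ℝ → ℝ} {a ε : ℝ}
    (hg : IntegrableOn g (Ioi a)) (hε : 0 < ε) :
    ∃ b, a ≤ b ∧ ∫ y in Ioi b, g y ≤ ε := by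
  have hempty : (⋂ n : ℕ, Ioi (a + n)) = ∅ :=
    eq_empty_of_forall_notMem fun y hy => by
      obtain ⟨n, hn⟩ := exists_nat_gt (y - a)
      exact (mem_iInter.1 hy n).out.not_gt (by linarith)
  have hlim : Tendsto (fun n : ℕ => ∫ y in Ioi (a + n), g y) atTop (𝓝 0) := by
    have := tendsto_setIntegral_of_antitone (s := fun n : ℕ => Ioi (a + n)) (f := g)
      (fun _ => measurableSet_Ioi) (fun m n hmn => Ioi_subset_Ioi (by gcongr))
      ⟨0, by simpa using hg⟩
    rwa [hempty, setIntegral_empty] at this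
  obtain ⟨n, hn⟩ := (hlim.eventually (eventually_le_nhds hε)).exists
  exact ⟨a + n, by simp, hn⟩

theorem MeasureTheory.IntegrableOn.exists_pos_forall_setIntegral_Ioc_le {g : ℝ → ℝ} {a ε : ℝ}
    (hg : IntegrableOn g (Ioi a)) (hε : 0 < ε) :
    ∃ δ > 0, ∀ x, a ≤ x → ∫ y in Ioc x (x + δ), g y ≤ ε := by
  -- absolute continuity: set integrals tend to `0` along the filter of sets of small measure
  have hlim := hg.tendsto_setIntegral_nhds_zero (l := comap (volume.restrict (Ioi a)) (𝓝 0))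
    (s := id) tendsto_comap
  obtain ⟨t, ht, hts⟩ := mem_comap.1 (hlim.eventually (eventually_le_nhds hε))
  obtain ⟨η, hη, hηt⟩ := ENNReal.nhds_zero_basis.mem_iff.1 ht
  obtain ⟨δ, -, hδ, hδη⟩ := ENNReal.lt_iff_exists_real_btwn.1 hη
  refine ⟨δ, ENNReal.ofReal_pos.1 hδ, fun x hx => ?_⟩
  have hsub : Ioc x (x + δ) ⊆ Ioi a := fun y hy => hx.trans_lt hy.1
  have hmeas : volume.restrict (Ioi a) (Ioc x (x + δ)) ∈ t := by
    refine hηt (lt_of_le_of_lt ?_ hδη)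
    rw [Measure.restrict_apply measurableSet_Ioc, inter_eq_self_of_subset_left hsub,
      Real.volume_Ioc, add_sub_cancel_left]
  simpa [Measure.restrict_restrict measurableSet_Ioc, inter_eq_self_of_subset_left hsub]
    using hts hmeas

section BackwardGronwall

variable {g H : ℝ → ℝ} {M : ℝ}

theorem eq_zero_of_le_integral_Ioi_mul_of_eq_zero_off (hg0 : ∀ y, 0 ≤ g y) (hH0 : ∀ y, 0 ≤ H y)
    {b : ℝ} (hHM : ∀ y, b ≤ y → H y ≤ M)
    (hH : ∀ x, b ≤ x → H x ≤ ∫ y in Ioi x, g y * H y) {s : Set ℝ} (hs : MeasurableSet s)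
    (hgs : IntegrableOn g s) (hgs_le : ∫ y in s, g y ≤ 1 / 2)
    (hzero : ∀ y, b < y → y ∉ s → H y = 0) :
    ∀ x, b ≤ x → H x = 0 := by
  refine fun x hx => le_antisymm (nonpos_of_forall_le_half (S := Ici b) hHM ?_ x hx) (hH0 x)
  intro B hB x hx
  have hB0 : 0 ≤ B := (hH0 x).trans (hB x hx)
  have hint : Integrable (s.indicator fun y => g y * B) := IntegrableOn.integrable_indicator (hgs.mul_const B) hs
  have hle : ∀ y ∈ Ioi x, g y * H y ≤ s.indicator (fun y => g y * B) y := by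
    intro y hy
    by_cases hys : y ∈ s
    · rw [indicator_of_mem hys]
      exact mul_le_mul_of_nonneg_left (hB y (mem_Ici.2 (hx.out.trans hy.out.le))) (hg0 y)
    · rw [indicator_of_notMem hys, hzero y (lt_of_le_of_lt hx hy) hys, mul_zero]
  calc H x ≤ ∫ y in Ioi x, g y * H y := hH x hx
    _ ≤ ∫ y in Ioi x, s.indicator (fun y => g y * B) y :=
      integral_mono_of_nonneg (ae_of_all _ fun y => mul_nonneg (hg0 y) (hH0 y))
        hint.integrableOn ((ae_restrict_iff' measurableSet_Ioi).2 (ae_of_all _ hle))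
    _ ≤ ∫ y, s.indicator (fun y => g y * B) y :=
      setIntegral_le_integral hint (ae_of_all _ fun y =>
        indicator_nonneg (fun y _ => mul_nonneg (hg0 y) hB0) y)
    _ = (∫ y in s, g y) * B := by rw [integral_indicator hs, integral_mul_const]
    _ ≤ 1 / 2 * B := by gcongr
    _ = B / 2 := by ring

theorem eq_zero_of_le_integral_Ioi_mul {a : ℝ} (hg : IntegrableOn g (Ioi a))
    (hg0 : ∀ y, 0 ≤ g y) (hH0 : ∀ y, 0 ≤ H y) (hHM : ∀ y, a ≤ y → H y ≤ M)
    (hH : ∀ x, a ≤ x → H x ≤ ∫ y in Ioi x, g y * H y) :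
    ∀ x, a ≤ x → H x = 0 := by
  obtain ⟨B, haB, hB⟩ := hg.exists_setIntegral_Ioi_le one_half_pos
  obtain ⟨δ, hδ, hδg⟩ := hg.exists_pos_forall_setIntegral_Ioc_le one_half_pos
  have hvanish (b : ℝ) (hab : a ≤ b) (s : Set ℝ) :=
    eq_zero_of_le_integral_Ioi_mul_of_eq_zero_off hg0 hH0 (fun y hy => hHM y (hab.trans hy))
      (fun x hx => hH x (hab.trans hx)) (s := s)
  have hcover : ∀ n : ℕ, ∀ x, max a (B - n * δ) ≤ x → H x = 0 := by
    intro n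
    induction n with
    | zero =>
      simpa [haB] using hvanish B haB (Ioi B) measurableSet_Ioi (hg.mono_set (Ioi_subset_Ioi haB)) hB
        fun y hy hys => (hys hy).elim
    | succ n ih =>
      set b := max a (B - (n + 1 : ℕ) * δ)
      have hab : a ≤ b := le_max_left _ _
      refine hvanish b hab (Ioc b (b + δ)) measurableSet_Ioc
        (hg.mono_set fun y hy => hab.trans_lt hy.1) (hδg b hab) fun y hy hys => ih y ?_
      have hyδ : b + δ < y := not_le.1 fun h => hys ⟨hy, h⟩
      have hBb : B - (n + 1 : ℕ) * δ ≤ b := le_max_right _ _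
      push_cast at hBb
      exact max_le (by linarith) (by linarith)
  intro x hx
  obtain ⟨n, hn⟩ := exists_nat_ge ((B - x) / δ)
  exact hcover n x (max_le hx (by rw [div_le_iff₀ hδ] at hn; linarith))

end BackwardGronwall

theorem MeasureTheory.IntegrableOn.norm_mul_norm_of_continuousOn {E F : Type*}
    [NormedAddCommGroup E] [NormedAddCommGroup F] {u : ℝ → E} {A : ℝ → F} {a C : ℝ}
    (hu : IntegrableOn u (Ioi a)) (hA : ContinuousOn A (Ioi a)) (hC : ∀ y ∈ Ioi a, ‖A y‖ ≤ C) :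
    IntegrableOn (fun y => ‖u y‖ * ‖A y‖) (Ioi a) := by
  refine Integrable.mono' (hu.norm.mul_const C)
    (hu.aestronglyMeasurable.norm.mul (hA.aestronglyMeasurable measurableSet_Ioi).norm)
    ((ae_restrict_iff' measurableSet_Ioi).2 (ae_of_all _ fun y hy => ?_))
  rw [norm_mul, norm_norm, norm_norm]
  exact mul_le_mul_of_nonneg_left (hC y hy) (norm_nonneg _)

-- `Matrix` is a type synonym, so the instance for `m → n → α` is not found by itself.
instance Matrix.pseudoMetrizableSpace {m n α : Type*} [Finite m] [Finite n]
    [TopologicalSpace α] [TopologicalSpace.PseudoMetrizableSpace α] :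
    TopologicalSpace.PseudoMetrizableSpace (Matrix m n α) :=
  inferInstanceAs (TopologicalSpace.PseudoMetrizableSpace (m → n → α))

namespace NLS

def sigmaConj (M : Matrix (Fin 2) (Fin 2) ℂ) : Matrix (Fin 2) (Fin 2) ℂ :=
  sigma1 * M.map (starRingEnd ℂ) * sigma1

theorem sigmaConj_apply (M : Matrix (Fin 2) (Fin 2) ℂ) (i j : Fin 2) :
    sigmaConj M i j = starRingEnd ℂ (M i.rev j.rev) := by
  fin_cases i <;> fin_cases j <;>
    simp [sigmaConj, sigma1, Matrix.mul_apply, Matrix.vecMul, dotProduct, Fin.sum_univ_two]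

theorem sigma1_mul_sigma1 : sigma1 * sigma1 = 1 := by
  ext i j
  fin_cases i <;> fin_cases j <;> simp [sigma1, Matrix.mul_apply, Fin.sum_univ_two]

theorem sigmaConj_one : sigmaConj 1 = 1 := by
  simpa [sigmaConj] using sigma1_mul_sigma1

theorem sigmaConj_sub (A B : Matrix (Fin 2) (Fin 2) ℂ) :
    sigmaConj (A - B) = sigmaConj A - sigmaConj B := by
  simp [sigmaConj, Matrix.map_sub, Matrix.mul_sub, Matrix.sub_mul]

theorem sigmaConj_mul (A B : Matrix (Fin 2) (Fin 2) ℂ) :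
    sigmaConj (A * B) = sigmaConj A * sigmaConj B := by
  simp only [sigmaConj, Matrix.map_mul]
  rw [show sigma1 * A.map (starRingEnd ℂ) * sigma1 * (sigma1 * B.map (starRingEnd ℂ) * sigma1) =
      sigma1 * A.map (starRingEnd ℂ) * (sigma1 * sigma1) * B.map (starRingEnd ℂ) * sigma1 by
    noncomm_ring, sigma1_mul_sigma1]
  noncomm_ring

theorem continuous_sigmaConj : Continuous sigmaConj :=
  (continuous_const.matrix_mul (continuous_id.matrix_map Complex.continuous_conj)).matrix_mul
    continuous_const

theorem sigmaConj_D (k x y : ℝ) : sigmaConj (D k x y) = D k x y := by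
  ext i j
  fin_cases i <;> fin_cases j <;> simp [sigmaConj_apply, D, ← Complex.exp_conj]

theorem sigmaConj_U0 (u₀ : ℝ → ℂ) (y : ℝ) : sigmaConj (U0 u₀ y) = U0 u₀ y := by
  ext i j
  fin_cases i <;> fin_cases j <;> simp [sigmaConj_apply, U0]

theorem sigmaConj_D_mul_U0_mul_D (u₀ : ℝ → ℂ) (k x y : ℝ) (A : Matrix (Fin 2) (Fin 2) ℂ) :
    sigmaConj (D k x y * (U0 u₀ y * A) * D k y x) =
      D k x y * (U0 u₀ y * sigmaConj A) * D k y x := by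
  simp only [sigmaConj_mul, sigmaConj_D, sigmaConj_U0]

variable {u₀ : ℝ → ℂ} {k a₀ : ℝ} {μ ν : ℝ → Matrix (Fin 2) (Fin 2) ℂ}

theorem IsVolterraSolution.sigmaConj (hμ : IsVolterraSolution u₀ k a₀ μ) :
    IsVolterraSolution u₀ k a₀ (fun x => sigmaConj (μ x)) := by
  obtain ⟨hcont, ⟨C, hC⟩, heq⟩ := hμ
  refine ⟨continuous_sigmaConj.comp_continuousOn hcont, ⟨C, fun x hx i j => ?_⟩, fun x hx => ?_⟩
  · dsimp only
    rw [sigmaConj_apply, Complex.norm_conj]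
    exact hC x hx _ _
  · dsimp only
    rw [heq x hx, sigmaConj_sub, sigmaConj_one]
    ext i j
    simp [sigmaConj_apply, ← integral_conj, ← sigmaConj_D_mul_U0_mul_D]

theorem aestronglyMeasurable_D_mul_U0_mul_D {m : Measure ℝ} (hu : AEStronglyMeasurable u₀ m)
    {A : ℝ → Matrix (Fin 2) (Fin 2) ℂ} (hA : AEStronglyMeasurable A m) (x : ℝ) :
    AEStronglyMeasurable (fun y => D k x y * (U0 u₀ y * A y) * D k y x) m := by
  have hD : Continuous fun p : ℝ × ℝ => D k p.1 p.2 := by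
    refine Continuous.matrix_diagonal (continuous_pi fun i => ?_)
    fin_cases i <;> simp <;> fun_prop
  have hU : Continuous fun z : ℂ => (Matrix.of ![![0, z], ![starRingEnd ℂ z, 0]] :
      Matrix (Fin 2) (Fin 2) ℂ) := by
    refine continuous_pi fun i => continuous_pi fun j => ?_
    fin_cases i <;> fin_cases j <;> simp <;> fun_prop
  exact ((hD.comp (Continuous.prodMk_right x)).aestronglyMeasurable.mul
    ((hU.comp_aestronglyMeasurable hu).mul hA)).mul
    (hD.comp (Continuous.prodMk_left x)).aestronglyMeasurable

section SupNorm

attribute [local instance] Matrix.normedAddCommGroup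

theorem norm_U0_mul_le (u₀ : ℝ → ℂ) (y : ℝ) (A : Matrix (Fin 2) (Fin 2) ℂ) :
    ‖U0 u₀ y * A‖ ≤ ‖u₀ y‖ * ‖A‖ := by
  refine (Matrix.norm_le_iff (by positivity)).2 fun i j => ?_
  fin_cases i <;> simp [U0, Matrix.mul_apply, Fin.sum_univ_two] <;> gcongr <;>
    exact Matrix.norm_entry_le_entrywise_sup_norm A

theorem norm_D_mul_mul_D_le (k x y : ℝ) (M : Matrix (Fin 2) (Fin 2) ℂ) :
    ‖D k x y * M * D k y x‖ ≤ ‖M‖ := by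
  refine (Matrix.norm_le_iff (norm_nonneg _)).2 fun i j => ?_
  rw [D, D, Matrix.mul_diagonal, Matrix.diagonal_mul, norm_mul, norm_mul]
  have hunit : ∀ a b : ℝ, ∀ i : Fin 2,
      ‖![Complex.exp (Complex.I * k * (a - b)), Complex.exp (-(Complex.I * k * (a - b)))] i‖ =
        1 := by
    intro a b i
    fin_cases i <;> simp [Complex.norm_exp]
  rw [hunit, hunit, one_mul, mul_one]
  exact Matrix.norm_entry_le_entrywise_sup_norm M

theorem norm_D_mul_U0_mul_D_le (u₀ : ℝ → ℂ) (k x y : ℝ) (A : Matrix (Fin 2) (Fin 2) ℂ) :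
    ‖D k x y * (U0 u₀ y * A) * D k y x‖ ≤ ‖u₀ y‖ * ‖A‖ :=
  (norm_D_mul_mul_D_le k x y _).trans (norm_U0_mul_le u₀ y A)

theorem integrableOn_D_mul_U0_mul_D_apply {x C : ℝ} (hu : IntegrableOn u₀ (Ioi x))
    {A : ℝ → Matrix (Fin 2) (Fin 2) ℂ} (hA : ContinuousOn A (Ioi x))
    (hC : ∀ y ∈ Ioi x, ‖A y‖ ≤ C) (i j : Fin 2) :
    IntegrableOn (fun y => (D k x y * (U0 u₀ y * A y) * D k y x) i j) (Ioi x) :=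
  Integrable.mono' (hu.norm_mul_norm_of_continuousOn hA hC)
    ((continuous_id.matrix_elem i j).comp_aestronglyMeasurable
      (aestronglyMeasurable_D_mul_U0_mul_D hu.aestronglyMeasurable
        (hA.aestronglyMeasurable measurableSet_Ioi) x))
    (ae_of_all _ fun y =>
      (Matrix.norm_entry_le_entrywise_sup_norm _).trans (norm_D_mul_U0_mul_D_le u₀ k x y _))

theorem IsVolterraSolution.exists_norm_le (hμ : IsVolterraSolution u₀ k a₀ μ) :
    ∃ C, ∀ y, a₀ ≤ y → ‖μ y‖ ≤ C := by
  obtain ⟨-, ⟨C, hC⟩, -⟩ := hμ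
  exact ⟨max C 0, fun y hy => (Matrix.norm_le_iff (le_max_right _ _)).2 fun i j =>
    (hC y hy i j).trans (le_max_left _ _)⟩

theorem IsVolterraSolution.norm_sub_le_integral (hu : IntegrableOn u₀ (Ioi a₀))
    (hμ : IsVolterraSolution u₀ k a₀ μ) (hν : IsVolterraSolution u₀ k a₀ ν) {x : ℝ}
    (hx : a₀ ≤ x) : ‖μ x - ν x‖ ≤ ∫ y in Ioi x, ‖u₀ y‖ * ‖μ y - ν y‖ := by
  obtain ⟨Cμ, hCμ⟩ := hμ.exists_norm_le
  obtain ⟨Cν, hCν⟩ := hν.exists_norm_le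
  have hsub : Ioi x ⊆ Ici a₀ := fun y hy => hx.trans hy.out.le
  have hux : IntegrableOn u₀ (Ioi x) := hu.mono_set (Ioi_subset_Ioi hx)
  refine (Matrix.norm_le_iff (setIntegral_nonneg measurableSet_Ioi fun y _ => by positivity)).2
    fun i j => ?_
  have hdiff : (μ x - ν x) i j =
      ∫ y in Ioi x, (D k x y * (U0 u₀ y * (ν y - μ y)) * D k y x) i j := by
    rw [Matrix.sub_apply, hμ.2.2 x hx, hν.2.2 x hx]
    simp only [Matrix.sub_apply, Matrix.of_apply, sub_sub_sub_cancel_left]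
    rw [← integral_sub
      (integrableOn_D_mul_U0_mul_D_apply hux (hν.1.mono hsub) (fun y hy => hCν y (hsub hy)) i j)
      (integrableOn_D_mul_U0_mul_D_apply hux (hμ.1.mono hsub) (fun y hy => hCμ y (hsub hy)) i j)]
    simp only [Matrix.mul_sub, Matrix.sub_mul, Matrix.sub_apply]
  rw [hdiff]
  refine norm_integral_le_of_norm_le (hux.norm_mul_norm_of_continuousOn
    ((hμ.1.sub hν.1).mono hsub)
    (fun y hy => (norm_sub_le _ _).trans (add_le_add (hCμ y (hsub hy)) (hCν y (hsub hy)))))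
    (ae_of_all _ fun y => ?_)
  rw [norm_sub_rev (μ y)]
  exact (Matrix.norm_entry_le_entrywise_sup_norm _).trans (norm_D_mul_U0_mul_D_le u₀ k x y _)

theorem IsVolterraSolution.eqOn (hu : IntegrableOn u₀ (Ioi a₀))
    (hμ : IsVolterraSolution u₀ k a₀ μ) (hν : IsVolterraSolution u₀ k a₀ ν) :
    EqOn μ ν (Ici a₀) := by
  obtain ⟨Cμ, hCμ⟩ := hμ.exists_norm_le
  obtain ⟨Cν, hCν⟩ := hν.exists_norm_le
  have hzero := eq_zero_of_le_integral_Ioi_mul (H := fun y => ‖μ y - ν y‖) hu.norm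
    (fun _ => norm_nonneg _) (fun _ => norm_nonneg _)
    (fun y hy => (norm_sub_le _ _).trans (add_le_add (hCμ y hy) (hCν y hy)))
    (fun x hx => hμ.norm_sub_le_integral hu hν hx)
  exact fun x hx => sub_eq_zero.1 (norm_eq_zero.1 (hzero x hx))

end SupNorm

end NLS

theorem volterra_solution_symmetry_general (a₀ : ℝ) (u₀ : ℝ → ℂ)
    (hint : IntegrableOn u₀ (Ioi a₀)) (k : ℝ)
    (μ : ℝ → Matrix (Fin 2) (Fin 2) ℂ) (hμ : NLS.IsVolterraSolution u₀ k a₀ μ) :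
    ∀ x, a₀ ≤ x →
      (NLS.sigma1 * (μ x).map (starRingEnd ℂ) * NLS.sigma1 = μ x ∧
        μ x 1 1 = (starRingEnd ℂ) (μ x 0 0) ∧ μ x 1 0 = (starRingEnd ℂ) (μ x 0 1)) := by
  intro x hx
  have hsym : μ x = NLS.sigmaConj (μ x) := hμ.eqOn hint hμ.sigmaConj hx
  refine ⟨hsym.symm, ?_, ?_⟩ <;> (conv_lhs => rw [hsym, NLS.sigmaConj_apply]) <;> rfl

/-- The bounded continuous solution of the Volterra integral equation for the Jost
eigenfunction `μ₂` obeys the symmetry `σ₁ · conj(μ(x)) · σ₁ = μ(x)`; equivalently,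
`μ(x)₂₂ = conj(μ(x)₁₁)` and `μ(x)₂₁ = conj(μ(x)₁₂)`. -/
theorem volterra_solution_symmetry (a₀ : ℝ) (u₀ : ℝ → ℂ) (hmeas : Measurable u₀)
    (hint : IntegrableOn u₀ (Ioi a₀)) (k : ℝ)
    (μ : ℝ → Matrix (Fin 2) (Fin 2) ℂ) (hμ : NLS.IsVolterraSolution u₀ k a₀ μ) :
    ∀ x, a₀ ≤ x →
      (NLS.sigma1 * (μ x).map (starRingEnd ℂ) * NLS.sigma1 = μ x ∧
        μ x 1 1 = (starRingEnd ℂ) (μ x 0 0) ∧ μ x 1 0 = (starRingEnd ℂ) (μ x 0 1)) :=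
  volterra_solution_symmetry_general a₀ u₀ hint k μ hμ
end

section
/- Let a < b be reals and N ≥ 0 an integer, and define h(z) := ∫ₐᵇ (b−s)^{−1/2}·(s−z)^{−1} ds for z ∈ ℂ∖(−∞, b]. Then h(z) = −π·(z−b)^{−1/2} + Σ_{n=0}^{N} h_n·(z−b)^n + O(|z−b|^{N+1}) as z → b with z ∈ ℂ∖(−∞, b], where h_n := 2(−1)^n·(b−a)^{−n−1/2}/(2n+1). -/
/-!
Put `w = z - b`. Reflecting `s ↦ b - s` turns `h(z)` into `-∫₀^{b-a} t^{-1/2} (t + w)⁻¹ dt`.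
Over the whole half-line this integral is `π w^{-1/2}`: substitute `t = u²` and integrate
`(u² + c²)⁻¹`, `c = w^{1/2}`, with a logarithmic primitive. Hence `h(z) + π w^{-1/2}` is the tail
`∫_{b-a}^∞ t^{-1/2} (t + w)⁻¹ dt`. Expanding `(t + w)⁻¹` as a finite geometric sum in `-w/t`
produces the coefficients `h_n = ∫_{b-a}^∞ (-1)ⁿ t^{-n-3/2} dt` and the remainder
`(-w)^{N+1} ∫_{b-a}^∞ t^{-N-3/2} (t + w)⁻¹ dt`, which is `O(|w|^{N+1})` since `|t + w| ≥ t/2`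
as soon as `|w| ≤ (b-a)/2`.
-/

open MeasureTheory Set Finset

/-- The Cauchy-type integral `h(z) = ∫ₐᵇ (b−s)^{−1/2}·(s−z)^{−1} ds` for `z ∈ ℂ∖(−∞,b]`. -/
noncomputable def CauchyEndpoint.hfun (a b : ℝ) (z : ℂ) : ℂ :=
  ∫ s in Ioo a b, ((Real.sqrt (b - s) : ℂ) * ((s : ℂ) - z))⁻¹

namespace CauchyEndpoint

open Complex Filter Topology
open scoped Real

variable {w : ℂ}

lemma ofReal_add_mem_slitPlane (hw : w ∈ slitPlane) {t : ℝ} (ht : 0 ≤ t) :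
    (t : ℂ) + w ∈ slitPlane := by
  rw [mem_slitPlane_iff] at hw ⊢
  simp only [add_re, ofReal_re, add_im, ofReal_im, zero_add]
  rcases hw with hre | him
  · exact Or.inl (by linarith)
  · exact Or.inr him

lemma exists_pos_le_norm_ofReal_add (hw : w ∈ slitPlane) :
    ∃ δ > 0, ∀ t : ℝ, 0 ≤ t → δ ≤ ‖(t : ℂ) + w‖ := by
  rcases mem_slitPlane_iff.1 hw with hre | him
  · refine ⟨w.re, hre, fun t ht => ?_⟩
    have := re_le_norm ((t : ℂ) + w)
    simp only [add_re, ofReal_re] at this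
    linarith
  · refine ⟨|w.im|, abs_pos.2 him, fun t _ => ?_⟩
    simpa using abs_im_le_norm ((t : ℂ) + w)

lemma sub_norm_le_norm_ofReal_add {t : ℝ} (ht : 0 ≤ t) : t - ‖w‖ ≤ ‖(t : ℂ) + w‖ := by
  simpa [sub_neg_eq_add, Real.norm_of_nonneg ht] using norm_sub_norm_le (t : ℂ) (-w)

lemma exists_pos_mul_one_add_le_norm_ofReal_add (hw : w ∈ slitPlane) :
    ∃ κ > 0, ∀ t : ℝ, 0 ≤ t → κ * (1 + t) ≤ ‖(t : ℂ) + w‖ := by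
  obtain ⟨δ, hδ, hδle⟩ := exists_pos_le_norm_ofReal_add hw
  refine ⟨δ / (1 + ‖w‖ + δ), by positivity, fun t ht => ?_⟩
  rw [div_mul_eq_mul_div, div_le_iff₀ (by positivity)]
  -- `δ (1 + t) = (1 + ‖w‖) δ + δ (t - ‖w‖)`, where `δ ≤ ‖t + w‖` and `t - ‖w‖ ≤ ‖t + w‖`.
  nlinarith [hδle t ht, sub_norm_le_norm_ofReal_add (w := w) ht, norm_nonneg w]

lemma integrable_inv_sq_add (hw : w ∈ slitPlane) :
    Integrable fun u : ℝ => ((u : ℂ) ^ 2 + w)⁻¹ := by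
  obtain ⟨κ, hκ, hκle⟩ := exists_pos_mul_one_add_le_norm_ofReal_add hw
  have hsq (u : ℝ) : (u : ℂ) ^ 2 = ((u ^ 2 : ℝ) : ℂ) := by push_cast; rfl
  refine (integrable_inv_one_add_sq.const_mul κ⁻¹).mono' ?_ (.of_forall fun u => ?_)
  · refine (Continuous.inv₀ (by fun_prop) fun u => ?_).aestronglyMeasurable
    rw [hsq]
    exact slitPlane_ne_zero (ofReal_add_mem_slitPlane hw (sq_nonneg u))
  · rw [norm_inv, hsq, ← mul_inv, inv_le_inv₀ (norm_pos_iff.2 ?_) (by positivity)]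
    · exact hκle _ (sq_nonneg u)
    · exact slitPlane_ne_zero (ofReal_add_mem_slitPlane hw (sq_nonneg u))

lemma log_neg_of_im_pos {x : ℂ} (hx : 0 < x.im) : log (-x) = log x - π * I := by
  rw [log, log, norm_neg, arg_neg_eq_arg_sub_pi_of_im_pos hx]
  push_cast
  ring

lemma tendsto_log_ofReal_add_sub_log (d : ℂ) :
    Tendsto (fun u : ℝ => log ((u : ℂ) + d) - log u) atTop (𝓝 0) := by
  have hinv : Tendsto (fun u : ℝ => ((u : ℂ))⁻¹) atTop (𝓝 0) := by
    have h := (continuous_ofReal.tendsto 0).comp tendsto_inv_atTop_zero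
    rw [ofReal_zero] at h
    exact h.congr fun u => ofReal_inv u
  have hone : Tendsto (fun u : ℝ => 1 + d * (u : ℂ)⁻¹) atTop (𝓝 1) := by
    simpa using (hinv.const_mul d).const_add 1
  have hlog := (continuousAt_clog one_mem_slitPlane).tendsto.comp hone
  rw [log_one] at hlog
  refine hlog.congr' ?_
  filter_upwards [eventually_gt_atTop 0,
    hone.eventually (isOpen_slitPlane.mem_nhds one_mem_slitPlane)] with u hu hmem
  have hfactor : (u : ℂ) + d = u * (1 + d * (u : ℂ)⁻¹) := by
    field_simp [ofReal_ne_zero.2 hu.ne']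
  rw [Function.comp_apply, hfactor, log_ofReal_mul hu (slitPlane_ne_zero hmem),
    ofReal_log hu.le]
  ring

variable {c : ℂ}

lemma ofReal_sub_I_mul_mem_slitPlane (hc : 0 < c.re) (u : ℝ) : (u : ℂ) - I * c ∈ slitPlane :=
  mem_slitPlane_iff.2 (Or.inr (by simp [hc.ne']))

lemma ofReal_add_I_mul_mem_slitPlane (hc : 0 < c.re) (u : ℝ) : (u : ℂ) + I * c ∈ slitPlane :=
  mem_slitPlane_iff.2 (Or.inr (by simp [hc.ne']))

/-- This is `c⁻¹ arctan (u / c)`, written with logarithms that stay on the principal branch. -/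
noncomputable def primitiveInvSqAddSq (c : ℂ) (u : ℝ) : ℂ :=
  (2 * I * c)⁻¹ * (log (u - I * c) - log (u + I * c))

lemma hasDerivAt_primitiveInvSqAddSq (hc : 0 < c.re) (u : ℝ) :
    HasDerivAt (primitiveInvSqAddSq c) ((u : ℂ) ^ 2 + c ^ 2)⁻¹ u := by
  have hsub := ((hasDerivAt_log (ofReal_sub_I_mul_mem_slitPlane hc u)).comp (u : ℂ)
    ((hasDerivAt_id (u : ℂ)).sub_const (I * c))).comp_ofReal
  have hadd := ((hasDerivAt_log (ofReal_add_I_mul_mem_slitPlane hc u)).comp (u : ℂ)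
    ((hasDerivAt_id (u : ℂ)).add_const (I * c))).comp_ofReal
  refine ((hsub.sub hadd).const_mul (2 * I * c)⁻¹).congr_deriv ?_
  have hc0 : c ≠ 0 := fun h => by simp [h] at hc
  have hs := slitPlane_ne_zero (ofReal_sub_I_mul_mem_slitPlane hc u)
  have ha := slitPlane_ne_zero (ofReal_add_I_mul_mem_slitPlane hc u)
  have hprod : ((u : ℂ) - I * c) * ((u : ℂ) + I * c) = (u : ℂ) ^ 2 + c ^ 2 := by
    linear_combination (-c ^ 2) * I_sq
  rw [← hprod]
  field_simp
  ring

lemma primitiveInvSqAddSq_zero (hc : 0 < c.re) :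
    primitiveInvSqAddSq c 0 = -(π / (2 * c)) := by
  have hc0 : c ≠ 0 := fun h => by simp [h] at hc
  rw [primitiveInvSqAddSq, ofReal_zero, zero_sub, zero_add,
    log_neg_of_im_pos (by simpa using hc)]
  field_simp
  ring_nf

lemma tendsto_primitiveInvSqAddSq (c : ℂ) :
    Tendsto (primitiveInvSqAddSq c) atTop (𝓝 0) := by
  have h := ((tendsto_log_ofReal_add_sub_log (-(I * c))).sub
    (tendsto_log_ofReal_add_sub_log (I * c))).const_mul (2 * I * c)⁻¹
  rw [sub_zero, mul_zero] at h
  refine h.congr fun u => ?_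
  rw [primitiveInvSqAddSq, ← sub_eq_add_neg]
  ring

lemma re_cpow_inv_two_pos (hw : w ∈ slitPlane) : 0 < (w ^ (2⁻¹ : ℂ)).re := by
  rw [cpow_inv_two_re]
  apply Real.sqrt_pos.2
  rcases mem_slitPlane_iff.1 hw with hre | him
  · linarith [abs_re_le_norm w, le_abs_self w.re]
  · linarith [abs_re_lt_norm.2 him, neg_abs_le w.re]

theorem integral_Ioi_inv_sq_add (hw : w ∈ slitPlane) :
    ∫ u in Ioi (0 : ℝ), ((u : ℂ) ^ 2 + w)⁻¹ = π / (2 * w ^ (2⁻¹ : ℂ)) := by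
  have hc := re_cpow_inv_two_pos hw
  have hint := integrable_inv_sq_add hw
  set c := w ^ (2⁻¹ : ℂ)
  have hcw : c ^ 2 = w := cpow_ofNat_inv_pow w 2
  rw [← hcw] at hint ⊢
  rw [integral_Ioi_of_hasDerivAt_of_tendsto' (fun u _ => hasDerivAt_primitiveInvSqAddSq hc u)
    hint.integrableOn (tendsto_primitiveInvSqAddSq _), primitiveInvSqAddSq_zero hc]
  ring

lemma abs_two_mul_rpow_smul_inv_sqrt_mul_add (hw : w ∈ slitPlane) {x : ℝ} (hx : 0 < x) :
    (|(2 : ℝ)| * x ^ ((2 : ℝ) - 1)) • ((Real.sqrt (x ^ (2 : ℝ)) : ℂ) * ((x ^ (2 : ℝ) : ℝ) + w))⁻¹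
      = 2 * ((x : ℂ) ^ 2 + w)⁻¹ := by
  have hne : (x : ℂ) ^ 2 + w ≠ 0 := by
    simpa using slitPlane_ne_zero (ofReal_add_mem_slitPlane hw (sq_nonneg x))
  rw [Real.rpow_two, Real.sqrt_sq hx.le, abs_two, show (2 : ℝ) - 1 = 1 by norm_num,
    Real.rpow_one, real_smul]
  push_cast
  field_simp [ofReal_ne_zero.2 hx.ne']

lemma integrableOn_inv_sqrt_mul_add (hw : w ∈ slitPlane) :
    IntegrableOn (fun t : ℝ => ((Real.sqrt t : ℂ) * ((t : ℂ) + w))⁻¹) (Ioi 0) := by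
  rw [← integrableOn_Ioi_comp_rpow_iff _ two_ne_zero]
  exact IntegrableOn.congr_fun ((integrable_inv_sq_add hw).const_mul 2).integrableOn
    (fun x hx => (abs_two_mul_rpow_smul_inv_sqrt_mul_add hw hx).symm) measurableSet_Ioi

theorem integral_Ioi_inv_sqrt_mul_add (hw : w ∈ slitPlane) :
    ∫ t in Ioi (0 : ℝ), ((Real.sqrt t : ℂ) * ((t : ℂ) + w))⁻¹ = π * w ^ (-(1 / 2) : ℂ) := by
  rw [← integral_comp_rpow_Ioi _ two_ne_zero,
    setIntegral_congr_fun measurableSet_Ioi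
      fun x hx => abs_two_mul_rpow_smul_inv_sqrt_mul_add hw hx,
    integral_const_mul, integral_Ioi_inv_sq_add hw, one_div, cpow_neg]
  have := slitPlane_ne_zero hw
  field_simp

theorem hfun_eq_add_integral_Ioi (a b : ℝ) (hab : a ≤ b) {z : ℂ} (hz : z - b ∈ slitPlane) :
    hfun a b z = -(π * (z - b) ^ (-(1 / 2) : ℂ))
      + ∫ t in Ioi (b - a), ((Real.sqrt t : ℂ) * ((t : ℂ) + (z - b)))⁻¹ := by
  set f : ℝ → ℂ := fun t => ((Real.sqrt t : ℂ) * ((t : ℂ) + (z - b)))⁻¹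
  have hreflect : hfun a b z = -∫ s in a..b, f (b - s) := by
    rw [intervalIntegral.integral_of_le hab, integral_Ioc_eq_integral_Ioo, ← integral_neg]
    refine setIntegral_congr_fun measurableSet_Ioo fun s _ => ?_
    simp only [f, ofReal_sub, ← inv_neg, ← mul_neg]
    ring_nf
  have hint := integrableOn_inv_sqrt_mul_add hz
  rw [hreflect, intervalIntegral.integral_comp_sub_left, sub_self,
    ← intervalIntegral.integral_Ioi_sub_Ioi hint (by linarith), integral_Ioi_inv_sqrt_mul_add hz]
  ring

lemma inv_add_eq_sum_add {K : Type*} [Field K] {x y : K} (hx : x ≠ 0) (hxy : x + y ≠ 0)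
    (N : ℕ) :
    (x + y)⁻¹ = ∑ n ∈ range N, (-y) ^ n / x ^ (n + 1) + (-y) ^ N / (x ^ N * (x + y)) := by
  induction N with
  | zero => simp
  | succ N ih =>
    rw [ih, sum_range_succ]
    field_simp
    ring

lemma rpow_neg_natCast_sub_half {t : ℝ} (ht : 0 < t) (n : ℕ) :
    t ^ (-(n : ℝ) - 1 / 2) = (Real.sqrt t)⁻¹ / t ^ n := by
  rw [Real.rpow_sub ht, Real.rpow_neg ht.le, Real.rpow_natCast, ← Real.sqrt_eq_rpow]
  ring

lemma inv_sqrt_mul_add_eq_sum_add (hw : w ∈ slitPlane) {t : ℝ} (ht : 0 < t) (N : ℕ) :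
    ((Real.sqrt t : ℂ) * ((t : ℂ) + w))⁻¹
      = ∑ n ∈ range N, (-w) ^ n * ((t ^ (-((n + 1 : ℕ) : ℝ) - 1 / 2) : ℝ) : ℂ)
        + (-w) ^ N * (((t ^ (-(N : ℝ) - 1 / 2) : ℝ) : ℂ) * ((t : ℂ) + w)⁻¹) := by
  conv_lhs => rw [mul_inv, inv_add_eq_sum_add (ofReal_ne_zero.2 ht.ne')
    (slitPlane_ne_zero (ofReal_add_mem_slitPlane hw ht.le)) N, mul_add, mul_sum]
  simp only [rpow_neg_natCast_sub_half ht, ofReal_div, ofReal_inv, ofReal_pow]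
  congr 1
  · exact sum_congr rfl fun n _ => by ring
  · rw [div_eq_mul_inv, mul_inv]
    ring

lemma integrableOn_rpow_mul_inv_add (hw : w ∈ slitPlane) {L r : ℝ} (hL : 0 < L) (hr : r < -1) :
    IntegrableOn (fun t : ℝ => ((t ^ r : ℝ) : ℂ) * ((t : ℂ) + w)⁻¹) (Ioi L) := by
  obtain ⟨δ, hδ, hδle⟩ := exists_pos_le_norm_ofReal_add hw
  refine (integrableOn_Ioi_rpow_of_lt hr hL).ofReal.mul_bdd (c := δ⁻¹)
    (by fun_prop : Measurable fun t : ℝ => ((t : ℂ) + w)⁻¹).aestronglyMeasurable ?_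
  filter_upwards [ae_restrict_mem measurableSet_Ioi] with t ht
  rw [norm_inv]
  exact inv_anti₀ hδ (hδle t (hL.trans ht).le)

lemma neg_natCast_succ_sub_half_lt (n : ℕ) : -((n + 1 : ℕ) : ℝ) - 1 / 2 < -1 := by
  push_cast
  linarith [n.cast_nonneg (α := ℝ)]

lemma integral_Ioi_rpow_neg_natCast_sub_three_halves {L : ℝ} (hL : 0 < L) (n : ℕ) :
    ∫ t in Ioi L, t ^ (-((n + 1 : ℕ) : ℝ) - 1 / 2)
      = 2 * L ^ (-(n : ℝ) - 1 / 2) / (2 * n + 1) := by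
  rw [integral_Ioi_rpow_of_lt (neg_natCast_succ_sub_half_lt n) hL]
  push_cast
  rw [show -((n : ℝ) + 1) - 1 / 2 + 1 = -n - 1 / 2 by ring,
    div_eq_div_iff (by linarith [n.cast_nonneg (α := ℝ)]) (by positivity)]
  ring

theorem integral_Ioi_inv_sqrt_mul_add_eq_sum_add (hw : w ∈ slitPlane) {L : ℝ} (hL : 0 < L)
    (N : ℕ) :
    ∫ t in Ioi L, ((Real.sqrt t : ℂ) * ((t : ℂ) + w))⁻¹
      = ∑ n ∈ range (N + 1),
          ((2 * (-1) ^ n * L ^ (-(n : ℝ) - 1 / 2) / (2 * (n : ℝ) + 1) : ℝ) : ℂ) * w ^ n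
        + (-w) ^ (N + 1) *
          ∫ t in Ioi L, ((t ^ (-((N + 1 : ℕ) : ℝ) - 1 / 2) : ℝ) : ℂ) * ((t : ℂ) + w)⁻¹ := by
  have hterm (n : ℕ) : IntegrableOn (fun t : ℝ => (-w) ^ n
      * ((t ^ (-((n + 1 : ℕ) : ℝ) - 1 / 2) : ℝ) : ℂ)) (Ioi L) :=
    ((integrableOn_Ioi_rpow_of_lt (neg_natCast_succ_sub_half_lt n) hL).ofReal).const_mul _
  rw [setIntegral_congr_fun measurableSet_Ioi
      fun t ht => inv_sqrt_mul_add_eq_sum_add hw (hL.trans ht) (N + 1),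
    integral_add (integrable_finsetSum _ fun n _ => hterm n)
      ((integrableOn_rpow_mul_inv_add hw hL (neg_natCast_succ_sub_half_lt N)).const_mul _),
    integral_finsetSum _ fun n _ => hterm n, integral_const_mul]
  congr 1
  refine sum_congr rfl fun n _ => ?_
  rw [integral_const_mul, integral_complex_ofReal,
    integral_Ioi_rpow_neg_natCast_sub_three_halves hL, neg_pow]
  push_cast
  ring

lemma norm_integral_rpow_mul_inv_add_le {L r : ℝ} (hL : 0 < L) (hr : r < -1)
    (hw : ‖w‖ ≤ L / 2) :
    ‖∫ t in Ioi L, ((t ^ r : ℝ) : ℂ) * ((t : ℂ) + w)⁻¹‖ ≤ 2 / L * ∫ t in Ioi L, t ^ r := by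
  rw [← integral_const_mul]
  refine norm_integral_le_of_norm_le ((integrableOn_Ioi_rpow_of_lt hr hL).const_mul _) ?_
  filter_upwards [ae_restrict_mem measurableSet_Ioi] with t ht
  have ht0 : 0 < t := hL.trans ht
  have hfar : L / 2 ≤ ‖(t : ℂ) + w‖ := by
    linarith [sub_norm_le_norm_ofReal_add (w := w) ht0.le, ht.out]
  rw [norm_mul, norm_inv, norm_real, Real.norm_of_nonneg (Real.rpow_nonneg ht0.le r), mul_comm]
  exact mul_le_mul_of_nonneg_right ((inv_anti₀ (by positivity) hfar).trans_eq (by ring))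
    (Real.rpow_nonneg ht0.le r)

lemma sub_ofReal_mem_slitPlane_iff {z : ℂ} {b : ℝ} :
    z - b ∈ slitPlane ↔ z.im ≠ 0 ∨ b < z.re := by
  rw [mem_slitPlane_iff, sub_re, ofReal_re, sub_im, ofReal_im, sub_zero, sub_pos, or_comm]

end CauchyEndpoint

/-- Endpoint expansion: as `z → b` in `ℂ∖(−∞,b]`,
`h(z) = −π(z−b)^{−1/2} + Σ_{n=0}^{N} h_n (z−b)^n + O(|z−b|^{N+1})`, uniformly in
`arg(z−b) ∈ (−π,π)`, where `h_n = 2(−1)^n(b−a)^{−n−1/2}/(2n+1)`. -/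
theorem cauchy_endpoint_model_expansion (a b : ℝ) (hab : a < b) (N : ℕ) :
    (fun z : ℂ => CauchyEndpoint.hfun a b z
        - (-(Real.pi : ℂ) * (z - (b : ℂ)) ^ (-(1 / 2) : ℂ)
          + ∑ n ∈ range (N + 1),
            ((2 * (-1) ^ n * (b - a) ^ (-(n : ℝ) - 1 / 2) / (2 * (n : ℝ) + 1) : ℝ) : ℂ)
              * (z - (b : ℂ)) ^ n))
      =O[nhdsWithin (b : ℂ) {z : ℂ | z.im ≠ 0 ∨ b < z.re}]
      fun z => ‖z - (b : ℂ)‖ ^ ((N : ℝ) + 1) := by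
  have hL : 0 < b - a := sub_pos.2 hab
  have hr := CauchyEndpoint.neg_natCast_succ_sub_half_lt N
  refine Asymptotics.IsBigO.of_bound
    (2 / (b - a) * ∫ t in Ioi (b - a), t ^ (-((N + 1 : ℕ) : ℝ) - 1 / 2)) ?_
  filter_upwards [self_mem_nhdsWithin,
    nhdsWithin_le_nhds (Metric.closedBall_mem_nhds (b : ℂ) (half_pos hL))] with z hz hzb
  have hslit := CauchyEndpoint.sub_ofReal_mem_slitPlane_iff.2 hz
  rw [CauchyEndpoint.hfun_eq_add_integral_Ioi a b hab.le hslit,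
    CauchyEndpoint.integral_Ioi_inv_sqrt_mul_add_eq_sum_add hslit hL N, neg_mul,
    add_sub_add_left_eq_sub, add_sub_cancel_left, norm_mul, norm_pow, norm_neg,
    Real.norm_of_nonneg (by positivity), ← Nat.cast_add_one, Real.rpow_natCast, mul_comm]
  refine mul_le_mul_of_nonneg_right
    (CauchyEndpoint.norm_integral_rpow_mul_inv_add_le hL hr ?_) (by positivity)
  simpa [Metric.mem_closedBall, dist_eq_norm] using hzb
end

section
/- Let N ≥ 1 be an integer and q₀, q₁, …, q_{N−1} ∈ ℂ. Suppose that |Σ_{l=0}^{N−1} i^l·q_l·y^l|² = 1 + o(y^{N−1}) as real y → 0⁺. Then |q₀| = 1 and, for every n with 1 ≤ n ≤ N−1, Σ_{l=0}^{n} i^{n−l}·(−i)^l·q_{n−l}·conj(q_l) = 0. -/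
open Filter Set Polynomial Asymptotics Topology

/-!
With `P = Σ_{l<N} i^l q_l X^l` and `P̄` its coefficientwise conjugate, `P̄(y) = conj P(y)` for
real `y`, so `|P(y)|² - 1` is the value at `y` of the polynomial `P P̄ - 1`. A polynomial which is
`o(y^m)` as `y → 0⁺` has no coefficients of degree `≤ m`: otherwise, dividing by `y^t` for its
trailing degree `t ≤ m` leaves a polynomial that is `o(1)` yet nonzero at `0`. The relations are
the coefficients of degree `n ≤ N - 1` of `P P̄ - 1`.
-/

theorem Complex.tendsto_ofReal_nhdsGT_zero :
    Tendsto (fun y : ℝ => (y : ℂ)) (𝓝[>] 0) (𝓝[≠] 0) :=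
  tendsto_nhdsWithin_of_tendsto_nhds_of_eventually_within _
    (continuous_ofReal.tendsto' 0 0 ofReal_zero |>.mono_left nhdsWithin_le_nhds)
    (eventually_nhdsWithin_of_forall fun y hy => by simpa using (mem_Ioi.1 hy).ne')

namespace Polynomial

theorem exists_eq_X_pow_natTrailingDegree_mul {R : Type*} [Semiring R] (p : R[X]) :
    ∃ q : R[X], p = X ^ p.natTrailingDegree * q ∧ q.coeff 0 = p.trailingCoeff := by
  obtain ⟨q, hq⟩ : X ^ p.natTrailingDegree ∣ p :=
    X_pow_dvd_iff.2 fun _ => coeff_eq_zero_of_lt_natTrailingDegree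
  refine ⟨q, hq, ?_⟩
  rw [trailingCoeff, ← zero_add p.natTrailingDegree, ← coeff_X_pow_mul q, ← hq]

theorem coeff_eq_zero_of_isLittleO_pow {α 𝕜 : Type*} [NontriviallyNormedField 𝕜]
    {l : Filter α} [l.NeBot] {f : α → 𝕜} (hf : Tendsto f l (𝓝[≠] 0)) {p : 𝕜[X]} {m : ℕ}
    (h : (fun a => p.eval (f a)) =o[l] fun a => f a ^ m) {k : ℕ} (hk : k ≤ m) :
    p.coeff k = 0 := by
  rcases eq_or_ne p 0 with rfl | hp
  · exact coeff_zero k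
  refine coeff_eq_zero_of_lt_natTrailingDegree (hk.trans_lt ?_)
  by_contra! hle
  obtain ⟨q, hpq, hq0⟩ := p.exists_eq_X_pow_natTrailingDegree_mul
  set t := p.natTrailingDegree
  have hf0 : Tendsto f l (𝓝 0) := tendsto_nhds_of_tendsto_nhdsWithin hf
  have hfne : ∀ᶠ a in l, f a ≠ 0 := hf self_mem_nhdsWithin
  have hpow : (fun a => f a ^ m) =O[l] fun a => f a ^ t := by
    rcases hle.lt_or_eq with hlt | rfl
    · exact ((isLittleO_pow_pow hlt).comp_tendsto hf0).isBigO
    · exact isBigO_refl _ _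
  have hlim0 : Tendsto (fun a => q.eval (f a)) l (𝓝 0) := by
    refine (h.trans_isBigO hpow).tendsto_div_nhds_zero.congr' ?_
    filter_upwards [hfne] with a ha
    rw [hpq, eval_mul, eval_pow, eval_X]
    field_simp
  have hlim : Tendsto (fun a => q.eval (f a)) l (𝓝 (q.eval 0)) :=
    (q.continuous.tendsto 0).comp hf0
  rw [coeff_zero_eq_eval_zero] at hq0
  exact trailingCoeff_nonzero_iff_nonzero.2 hp (hq0 ▸ tendsto_nhds_unique hlim hlim0)

theorem coeff_mul_eq_sum_range {R : Type*} [Semiring R] (p q : R[X]) (n : ℕ) :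
    (p * q).coeff n = ∑ l ∈ Finset.range (n + 1), p.coeff (n - l) * q.coeff l := by
  rw [coeff_mul, ← Finset.Nat.sum_antidiagonal_swap]
  exact Finset.Nat.sum_antidiagonal_eq_sum_range_succ (fun i j => p.coeff j * q.coeff i) n

theorem coeff_sum_range_C_mul_X_pow {R : Type*} [Semiring R] (c : ℕ → R) (N n : ℕ) :
    (∑ l ∈ Finset.range N, C (c l) * X ^ l).coeff n = if n < N then c n else 0 := by
  simp only [finsetSum_coeff, coeff_C_mul_X_pow, Finset.sum_ite_eq, Finset.mem_range]

theorem eval_mul_map_conj_ofReal {𝕜 : Type*} [RCLike 𝕜] (p : 𝕜[X]) (x : ℝ) :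
    (p * p.map (starRingEnd 𝕜)).eval (x : 𝕜) = ((‖p.eval (x : 𝕜)‖ ^ 2 : ℝ) : 𝕜) := by
  have hx : starRingEnd 𝕜 x = x := RCLike.conj_ofReal x
  rw [eval_mul, ← hx, eval_map_apply, hx, RCLike.mul_conj, RCLike.ofReal_pow]

theorem sum_coeff_mul_conj_coeff_eq_of_isLittleO {p : ℂ[X]} {m : ℕ}
    (h : (fun y : ℝ => ‖p.eval (y : ℂ)‖ ^ 2 - 1) =o[𝓝[>] 0] fun y => y ^ m) {k : ℕ}
    (hk : k ≤ m) :
    ∑ l ∈ Finset.range (k + 1), p.coeff (k - l) * starRingEnd ℂ (p.coeff l) =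
      if k = 0 then 1 else 0 := by
  have heval (y : ℝ) : (p * p.map (starRingEnd ℂ) - 1).eval (y : ℂ) =
      ((‖p.eval (y : ℂ)‖ ^ 2 - 1 : ℝ) : ℂ) := by
    rw [eval_sub, eval_one, Complex.ofReal_sub, Complex.ofReal_one]
    exact congrArg (· - 1) (eval_mul_map_conj_ofReal p y)
  have hvanish := coeff_eq_zero_of_isLittleO_pow Complex.tendsto_ofReal_nhdsGT_zero
    (p := p * p.map (starRingEnd ℂ) - 1) (by
      simpa only [heval, ← Complex.ofReal_pow, Complex.isLittleO_ofReal_left,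
        Complex.isLittleO_ofReal_right] using h) hk
  simpa only [coeff_sub, coeff_one, sub_eq_zero, coeff_mul_eq_sum_range, coeff_map,
    eq_comm (a := k)] using hvanish

end Polynomial

/-- If `|Σ_{l=0}^{N−1} i^l q_l y^l|² = 1 + o(y^{N−1})` as `y → 0⁺`, then `|q₀| = 1` and
`Σ_{l=0}^{n} i^{n−l}(−i)^l q_{n−l} conj(q_l) = 0` for `1 ≤ n ≤ N−1`. -/
theorem reflection_coefficient_branch_point_relations (N : ℕ) (hN : 1 ≤ N) (q : ℕ → ℂ)
    (h : (fun y : ℝ =>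
        ‖∑ l ∈ Finset.range N, Complex.I ^ l * q l * (y : ℂ) ^ l‖ ^ 2 - 1)
      =o[nhdsWithin 0 (Ioi 0)] fun y : ℝ => y ^ (N - 1)) :
    ‖q 0‖ = 1 ∧
      ∀ n : ℕ, 1 ≤ n → n ≤ N - 1 →
        ∑ l ∈ Finset.range (n + 1),
          Complex.I ^ (n - l) * (-Complex.I) ^ l * q (n - l) * (starRingEnd ℂ) (q l) = 0 := by
  set P : ℂ[X] := ∑ l ∈ Finset.range N, C (Complex.I ^ l * q l) * X ^ l with hP
  have hPcoeff : ∀ n < N, P.coeff n = Complex.I ^ n * q n := fun n hn => by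
    rw [hP, coeff_sum_range_C_mul_X_pow, if_pos hn]
  have hPeval (y : ℝ) : P.eval (y : ℂ) = ∑ l ∈ Finset.range N, Complex.I ^ l * q l * (y : ℂ) ^ l :=
    by simp [P, eval_finsetSum]
  have hrel (n : ℕ) (hn : n ≤ N - 1) : ∑ l ∈ Finset.range (n + 1),
      Complex.I ^ (n - l) * (-Complex.I) ^ l * q (n - l) * (starRingEnd ℂ) (q l) =
        if n = 0 then 1 else 0 := by
    rw [← sum_coeff_mul_conj_coeff_eq_of_isLittleO (p := P) (by simpa only [hPeval] using h) hn]
    refine Finset.sum_congr rfl fun l hl => ?_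
    have hl : l ≤ n := Finset.mem_range_succ_iff.1 hl
    rw [hPcoeff (n - l) (by omega), hPcoeff l (by omega), map_mul, map_pow, Complex.conj_I]
    ring
  refine ⟨?_, fun n hn1 hn2 => by simpa [Nat.one_le_iff_ne_zero.1 hn1] using hrel n hn2⟩
  have h0 := hrel 0 (Nat.zero_le _)
  rw [zero_add, Finset.sum_range_one, if_pos rfl] at h0
  simp only [Nat.sub_self, pow_zero, one_mul, Complex.mul_conj'] at h0
  exact (pow_eq_one_iff_of_nonneg (norm_nonneg _) two_ne_zero).1 (by exact_mod_cast h0)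
end
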